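/- A mass-action ODE system has at most one WR0 realization: if (N,κ) and (N',κ') are two mass-action systems on n species such that N and N' are both WR0 networks and f_{(N,κ)}(x) = f_{(N',κ')}(x) for all x ∈ ℝ^n_{>0}, then N = N' (same set of reactions) and κ = κ' (the rate constant of each reaction agrees). -/

import Mathlib

/-!
Basic definitions for reaction networks, following the paper
"Weakly reversible deficiency zero realizations of reaction networks".
-/

noncomputable section

open Finset

/-- A complex (vertex of a Euclidean embedded graph) is a point of `ℝ^n`. -/
abbrev Cplx (n : ℕ) : Type := Fin n → ℝ

/-- A reaction network on `n` species: a finite directed graph with vertices in `ℝ^n`,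
given by its finite set of edges (reactions) `y → y'` with `y ≠ y'`.
Every vertex (complex) is incident to at least one edge, since the complexes are by
definition the endpoints of the edges. -/
structure ReactionNetwork (n : ℕ) where
  reactions : Finset (Cplx n × Cplx n)
  no_loops : ∀ r ∈ reactions, r.1 ≠ r.2

namespace ReactionNetwork

variable {n : ℕ}

/-- `κ` is a choice of positive rate constants for `N`. -/
def PosRates (N : ReactionNetwork n) (κ : Cplx n × Cplx n → ℝ) : Prop :=
  ∀ r ∈ N.reactions, 0 < κ r

/-- The monomial `x^y = x₁^{y₁} ⋯ x_n^{y_n}`. -/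
def monomial (x y : Cplx n) : ℝ := ∏ i, x i ^ y i

/-- The mass-action vector field `f_{(N,κ)}(x) = ∑_{y→y'∈N} κ_{y→y'} x^y (y'-y)`. -/
def massAction (N : ReactionNetwork n) (κ : Cplx n × Cplx n → ℝ) (x : Cplx n) : Cplx n :=
  ∑ r ∈ N.reactions, (κ r * monomial x r.1) • (r.2 - r.1)

/-- The source complexes of `N`. -/
def sources (N : ReactionNetwork n) : Finset (Cplx n) := N.reactions.image Prod.fst

/-- The complexes (vertices) of `N`. -/
def complexes (N : ReactionNetwork n) : Finset (Cplx n) :=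
  N.reactions.image Prod.fst ∪ N.reactions.image Prod.snd

/-- Undirected connectivity between complexes of `N`. -/
def linked (N : ReactionNetwork n) : Cplx n → Cplx n → Prop :=
  Relation.ReflTransGen (fun u v => (u, v) ∈ N.reactions ∨ (v, u) ∈ N.reactions)

/-- The linkage class (connected component) of the complex `y`. -/
def linkageClass (N : ReactionNetwork n) (y : Cplx n) : Set (Cplx n) :=
  {z | z ∈ N.complexes ∧ N.linked y z}

/-- The linkage class partition of `N`: the partition of its complexes into the
vertex sets of its connected components. -/
def linkagePartition (N : ReactionNetwork n) : Set (Set (Cplx n)) :=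
  {C | ∃ y ∈ N.complexes, C = N.linkageClass y}

/-- The number of linkage classes of `N`. -/
def numLinkageClasses (N : ReactionNetwork n) : ℕ :=
  N.linkagePartition.ncard

/-- The stoichiometric subspace `S_N = span{y' - y | y → y' ∈ N}`. -/
def stoichSubspace (N : ReactionNetwork n) : Submodule ℝ (Cplx n) :=
  Submodule.span ℝ {d | ∃ r ∈ N.reactions, d = r.2 - r.1}

/-- `N` is weakly reversible: every connected component is strongly connected,
i.e. every reaction is part of a directed cycle. -/
def WeaklyReversible (N : ReactionNetwork n) : Prop :=
  ∀ r ∈ N.reactions,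
    Relation.ReflTransGen (fun u v => (u, v) ∈ N.reactions) r.2 r.1

/-- `N` has deficiency zero: `|V| - l - dim S_N = 0`. -/
def DeficiencyZero (N : ReactionNetwork n) : Prop :=
  N.complexes.card = N.numLinkageClasses + Module.finrank ℝ N.stoichSubspace

/-- `N` is a WR₀ network: weakly reversible and of deficiency zero. -/
def WR0 (N : ReactionNetwork n) : Prop := N.WeaklyReversible ∧ N.DeficiencyZero

/-- `(N',κ')` is a realization of `(N,κ)`: the two mass-action systems generate the
same ODE system on the positive orthant. -/
def IsRealizationOf (N' : ReactionNetwork n) (κ' : Cplx n × Cplx n → ℝ)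
    (N : ReactionNetwork n) (κ : Cplx n × Cplx n → ℝ) : Prop :=
  ∀ x : Cplx n, (∀ i, 0 < x i) → N'.massAction κ' x = N.massAction κ x

/-- `N` is realizable by `N'`: for every choice of positive rate constants `κ` for `N`
there exist positive rate constants `κ'` for `N'` generating the same ODE system. -/
def RealizableBy (N N' : ReactionNetwork n) : Prop :=
  ∀ κ : Cplx n × Cplx n → ℝ, N.PosRates κ →
    ∃ κ' : Cplx n × Cplx n → ℝ, N'.PosRates κ' ∧ IsRealizationOf N' κ' N κ

/-- `N` is WR₀-realizable: for every choice of positive rate constants `κ`,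
the mass-action system `(N,κ)` has a WR₀ realization. -/
def WR0Realizable (N : ReactionNetwork n) : Prop :=
  ∀ κ : Cplx n × Cplx n → ℝ, N.PosRates κ →
    ∃ (N' : ReactionNetwork n) (κ' : Cplx n × Cplx n → ℝ),
      N'.WR0 ∧ N'.PosRates κ' ∧ IsRealizationOf N' κ' N κ

/-- The reactions of `N` with source complex `y`. -/
def reactionsFrom (N : ReactionNetwork n) (y : Cplx n) : Finset (Cplx n × Cplx n) :=
  N.reactions.filter (fun r => r.1 = y)

/-- `Cone_N(y)`: the cone of nonnegative combinations of the reaction vectors of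
reactions of `N` with source `y`. -/
def reactionCone (N : ReactionNetwork n) (y : Cplx n) : Set (Cplx n) :=
  {w | ∃ α : Cplx n × Cplx n → ℝ, (∀ r ∈ N.reactionsFrom y, 0 ≤ α r) ∧
        w = ∑ r ∈ N.reactionsFrom y, α r • (r.2 - r.1)}

/-- The net reaction vector `w_y = ∑_{y→y'∈N} κ_{y→y'} (y' - y)` of a source complex. -/
def netVector (N : ReactionNetwork n) (κ : Cplx n × Cplx n → ℝ) (y : Cplx n) : Cplx n :=
  ∑ r ∈ N.reactionsFrom y, κ r • (r.2 - r.1)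

/-! ### Chunk A : graph basics -/

variable {N : ReactionNetwork n}

lemma linked_refl (N : ReactionNetwork n) (y : Cplx n) : N.linked y y :=
  Relation.ReflTransGen.refl

lemma linked_symm {u v : Cplx n} (h : N.linked u v) : N.linked v u :=
  by
  haveI : Std.Symm (fun u v : Cplx n => (u, v) ∈ N.reactions ∨ (v, u) ∈ N.reactions) :=
    ⟨fun _ _ h => h.symm⟩
  exact (Relation.ReflTransGen.stdSymm).symm _ _ h

lemma linked_trans {u v w : Cplx n} (h : N.linked u v) (h' : N.linked v w) : N.linked u w :=
  h.trans h'

lemma fst_mem_complexes {r : Cplx n × Cplx n} (hr : r ∈ N.reactions) : r.1 ∈ N.complexes :=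
  Finset.mem_union_left _ (Finset.mem_image_of_mem _ hr)

lemma snd_mem_complexes {r : Cplx n × Cplx n} (hr : r ∈ N.reactions) : r.2 ∈ N.complexes :=
  Finset.mem_union_right _ (Finset.mem_image_of_mem _ hr)

lemma linked_of_reaction {r : Cplx n × Cplx n} (hr : r ∈ N.reactions) : N.linked r.1 r.2 :=
  Relation.ReflTransGen.single (Or.inl hr)

lemma sources_subset_complexes (N : ReactionNetwork n) : N.sources ⊆ N.complexes :=
  Finset.subset_union_left

/-- In a weakly reversible network, undirected connectivity implies directed connectivity. -/
lemma WeaklyReversible.dirPath (hN : N.WeaklyReversible) {u v : Cplx n} (h : N.linked u v) :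
    Relation.ReflTransGen (fun a b => (a, b) ∈ N.reactions) u v := by
  induction h with
  | refl => exact Relation.ReflTransGen.refl
  | tail hst hr ih =>
    rcases hr with hr | hr
    · exact ih.tail hr
    · exact ih.trans (hN (_, _) hr)

/-- In a weakly reversible network, every complex is a source. -/
lemma WeaklyReversible.mem_sources (hN : N.WeaklyReversible) {y : Cplx n}
    (hy : y ∈ N.complexes) : y ∈ N.sources := by
  rcases Finset.mem_union.1 hy with hy | hy
  · exact hy
  · rcases Finset.mem_image.1 hy with ⟨r, hr, hry⟩
    have hpath := hN r hr
    rw [hry] at hpath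
    rcases hpath.cases_head with heq | ⟨c, hc, _⟩
    · exact absurd (heq.symm.trans hry.symm) (N.no_loops r hr)
    · exact Finset.mem_image.2 ⟨(y, c), hc, rfl⟩

lemma WeaklyReversible.sources_eq (hN : N.WeaklyReversible) : N.sources = N.complexes :=
  Finset.Subset.antisymm (sources_subset_complexes N) (fun _ hy => hN.mem_sources hy)

/-- In a weakly reversible network, every complex has an outgoing reaction. -/
lemma WeaklyReversible.exists_out (hN : N.WeaklyReversible) {y : Cplx n}
    (hy : y ∈ N.complexes) : ∃ r ∈ N.reactions, r.1 = y := by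
  rcases Finset.mem_image.1 (hN.mem_sources hy) with ⟨r, hr, hry⟩
  exact ⟨r, hr, hry⟩

/-! ### Chunk B : linkage classes as finsets -/

open Classical in
/-- The linkage class of `y` as a `Finset`. -/
def classOf (N : ReactionNetwork n) (y : Cplx n) : Finset (Cplx n) :=
  N.complexes.filter (fun z => N.linked y z)

lemma mem_classOf {y z : Cplx n} : z ∈ N.classOf y ↔ z ∈ N.complexes ∧ N.linked y z := by
  simp [classOf]

lemma classOf_subset (N : ReactionNetwork n) (y : Cplx n) : N.classOf y ⊆ N.complexes :=
  fun _ h => (mem_classOf.1 h).1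

lemma self_mem_classOf {y : Cplx n} (hy : y ∈ N.complexes) : y ∈ N.classOf y :=
  mem_classOf.2 ⟨hy, linked_refl N y⟩

lemma classOf_eq_of_linked {y z : Cplx n} (h : N.linked y z) : N.classOf y = N.classOf z := by
  ext u
  simp only [mem_classOf]
  exact ⟨fun ⟨hu, hl⟩ => ⟨hu, (linked_symm h).trans hl⟩, fun ⟨hu, hl⟩ => ⟨hu, h.trans hl⟩⟩

lemma classOf_eq_of_mem {y z : Cplx n} (h : z ∈ N.classOf y) : N.classOf z = N.classOf y :=
  (classOf_eq_of_linked (mem_classOf.1 h).2).symm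

lemma linked_of_mem_classOf {y z : Cplx n} (h : z ∈ N.classOf y) : N.linked y z :=
  (mem_classOf.1 h).2

/-- Two members of a common class are linked. -/
lemma linked_of_mem_mem {y u v : Cplx n} (hu : u ∈ N.classOf y) (hv : v ∈ N.classOf y) :
    N.linked u v :=
  (linked_symm (linked_of_mem_classOf hu)).trans (linked_of_mem_classOf hv)

/-- The classes of `N`. -/
def classes (N : ReactionNetwork n) : Finset (Finset (Cplx n)) :=
  N.complexes.image N.classOf

lemma classOf_mem_classes {y : Cplx n} (hy : y ∈ N.complexes) : N.classOf y ∈ N.classes :=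
  Finset.mem_image_of_mem _ hy

lemma classes_eq_classOf {C : Finset (Cplx n)} (hC : C ∈ N.classes) :
    ∃ y ∈ N.complexes, C = N.classOf y := by
  rcases Finset.mem_image.1 hC with ⟨y, hy, h⟩
  exact ⟨y, hy, h.symm⟩

lemma classes_nonempty {C : Finset (Cplx n)} (hC : C ∈ N.classes) : C.Nonempty := by
  rcases classes_eq_classOf hC with ⟨y, hy, rfl⟩
  exact ⟨y, self_mem_classOf hy⟩

/-- Classes are disjoint or equal. -/
lemma classes_eq_of_mem_mem {C C' : Finset (Cplx n)} (hC : C ∈ N.classes) (hC' : C' ∈ N.classes)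
    {v : Cplx n} (hv : v ∈ C) (hv' : v ∈ C') : C = C' := by
  rcases classes_eq_classOf hC with ⟨y, hy, rfl⟩
  rcases classes_eq_classOf hC' with ⟨y', hy', rfl⟩
  rw [← classOf_eq_of_mem hv, ← classOf_eq_of_mem hv']

lemma mem_class_iff_of_linked {C : Finset (Cplx n)} (hC : C ∈ N.classes) {u v : Cplx n}
    (huv : N.linked u v) (hu : u ∈ N.complexes) (hv : v ∈ N.complexes) :
    u ∈ C ↔ v ∈ C := by
  rcases classes_eq_classOf hC with ⟨y, hy, rfl⟩
  simp only [mem_classOf]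
  exact ⟨fun ⟨_, h⟩ => ⟨hv, h.trans huv⟩, fun ⟨_, h⟩ => ⟨hu, h.trans (linked_symm huv)⟩⟩

/-- The fiber of the class map over `classOf y` is `classOf y` itself. -/
lemma fiber_classOf {y : Cplx n} (hy : y ∈ N.complexes) :
    N.complexes.filter (fun v => N.classOf v = N.classOf y) = N.classOf y := by
  ext z
  simp only [Finset.mem_filter, mem_classOf]
  constructor
  · rintro ⟨hz, he⟩
    exact ⟨hz, linked_of_mem_classOf (he ▸ self_mem_classOf hz)⟩
  · rintro ⟨hz, hl⟩
    exact ⟨hz, (classOf_eq_of_linked hl).symm⟩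

/-! ### Chunk C : counting linkage classes -/

lemma linkageClass_eq_coe (N : ReactionNetwork n) (y : Cplx n) :
    N.linkageClass y = ↑(N.classOf y) := by
  ext z
  simp [linkageClass, mem_classOf]

lemma numLinkageClasses_eq_card_classes (N : ReactionNetwork n) :
    N.numLinkageClasses = N.classes.card := by
  have h1 : N.linkagePartition = (fun C : Finset (Cplx n) => (↑C : Set (Cplx n))) '' ↑N.classes := by
    ext C
    simp only [linkagePartition, Set.mem_setOf_eq, Set.mem_image, classes, Finset.coe_image,
      Set.mem_image, Finset.mem_coe]
    constructor
    · rintro ⟨y, hy, rfl⟩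
      exact ⟨N.classOf y, ⟨y, hy, rfl⟩, (linkageClass_eq_coe N y).symm⟩
    · rintro ⟨D, ⟨y, hy, rfl⟩, rfl⟩
      exact ⟨y, hy, (linkageClass_eq_coe N y).symm⟩
  rw [numLinkageClasses, h1, Set.ncard_image_of_injective _ Finset.coe_injective,
    Set.ncard_coe_finset]

/-! ### Chunk D : rates, columns, balance -/

def outRate (N : ReactionNetwork n) (κ : Cplx n × Cplx n → ℝ) (v : Cplx n) : ℝ :=
  ∑ r ∈ N.reactionsFrom v, κ r

def inRate (N : ReactionNetwork n) (κ : Cplx n × Cplx n → ℝ) (y v : Cplx n) : ℝ :=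
  ∑ r ∈ (N.reactionsFrom y).filter (fun r => r.2 = v), κ r

/-- The `y`-column of the Laplacian of `(N,κ)`, as a function on complexes. -/
def colF (N : ReactionNetwork n) (κ : Cplx n × Cplx n → ℝ) (y : Cplx n) : Cplx n → ℝ :=
  fun v => inRate N κ y v - if v = y then outRate N κ y else 0

/-- `a` is a balanced (invariant) coefficient assignment for the Laplacian of `(N,κ)`. -/
def Balanced (N : ReactionNetwork n) (κ : Cplx n × Cplx n → ℝ) (a : Cplx n → ℝ) : Prop :=
  ∀ v, ∑ r ∈ N.reactions.filter (fun r => r.2 = v), κ r * a r.1 = a v * outRate N κ v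

lemma mem_reactionsFrom {y : Cplx n} {r : Cplx n × Cplx n} :
    r ∈ N.reactionsFrom y ↔ r ∈ N.reactions ∧ r.1 = y := by
  simp [reactionsFrom]

lemma reactionsFrom_subset (N : ReactionNetwork n) (y : Cplx n) :
    N.reactionsFrom y ⊆ N.reactions := Finset.filter_subset _ _

lemma reactionsFrom_eq_empty {y : Cplx n} (hy : y ∉ N.sources) : N.reactionsFrom y = ∅ := by
  rw [Finset.eq_empty_iff_forall_notMem]
  intro r hr
  rcases mem_reactionsFrom.1 hr with ⟨h1, h2⟩
  exact hy (h2 ▸ Finset.mem_image_of_mem _ h1)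

lemma mem_sources_of_reactionsFrom {y : Cplx n} (h : (N.reactionsFrom y).Nonempty) :
    y ∈ N.sources := by
  by_contra hy
  rw [reactionsFrom_eq_empty hy] at h
  exact Finset.not_nonempty_empty h

lemma netVector_eq_zero {κ : Cplx n × Cplx n → ℝ} {y : Cplx n} (hy : y ∉ N.sources) :
    N.netVector κ y = 0 := by
  rw [netVector, reactionsFrom_eq_empty hy, Finset.sum_empty]

lemma outRate_eq_zero {κ : Cplx n × Cplx n → ℝ} {y : Cplx n} (hy : y ∉ N.sources) :
    N.outRate κ y = 0 := by
  rw [outRate, reactionsFrom_eq_empty hy, Finset.sum_empty]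

lemma outRate_pos {κ : Cplx n × Cplx n → ℝ} (hκ : N.PosRates κ) {y : Cplx n}
    (hy : y ∈ N.sources) : 0 < N.outRate κ y := by
  rcases Finset.mem_image.1 hy with ⟨r, hr, hry⟩
  refine Finset.sum_pos (fun r' hr' => hκ r' (reactionsFrom_subset N y hr')) ⟨r, ?_⟩
  exact mem_reactionsFrom.2 ⟨hr, hry⟩

lemma inRate_nonneg {κ : Cplx n × Cplx n → ℝ} (hκ : N.PosRates κ) (y v : Cplx n) :
    0 ≤ N.inRate κ y v :=
  Finset.sum_nonneg fun r hr => le_of_lt <| hκ r <|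
    reactionsFrom_subset N y (Finset.mem_of_mem_filter r hr)

lemma filter_reactionsFrom (y t : Cplx n) :
    (N.reactionsFrom y).filter (fun r => r.2 = t) =
      if (y, t) ∈ N.reactions then {(y, t)} else ∅ := by
  ext r
  simp only [Finset.mem_filter, mem_reactionsFrom]
  constructor
  · rintro ⟨⟨hr, h1⟩, h2⟩
    have : r = (y, t) := Prod.ext h1 h2
    rw [this] at hr
    simp [hr, this]
  · intro hr
    split_ifs at hr with h
    · simp only [Finset.mem_singleton] at hr
      subst hr; exact ⟨⟨h, rfl⟩, rfl⟩
    · simp at hr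

lemma inRate_eq (κ : Cplx n × Cplx n → ℝ) (y t : Cplx n) :
    N.inRate κ y t = if (y, t) ∈ N.reactions then κ (y, t) else 0 := by
  rw [inRate, filter_reactionsFrom]
  split_ifs <;> simp

lemma inRate_self (κ : Cplx n × Cplx n → ℝ) (y : Cplx n) : N.inRate κ y y = 0 := by
  rw [inRate_eq]
  split_ifs with h
  · exact absurd rfl (N.no_loops _ h)
  · rfl

lemma colF_apply_ne {κ : Cplx n × Cplx n → ℝ} {y v : Cplx n} (hvy : v ≠ y) :
    N.colF κ y v = if (y, v) ∈ N.reactions then κ (y, v) else 0 := by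
  rw [colF, if_neg hvy, sub_zero, inRate_eq]

lemma colF_self (κ : Cplx n × Cplx n → ℝ) (y : Cplx n) :
    N.colF κ y y = - N.outRate κ y := by
  rw [colF, if_pos rfl, inRate_self, zero_sub]

lemma mem_classOf_of_colF_ne {κ : Cplx n × Cplx n → ℝ} {y v : Cplx n}
    (h : N.colF κ y v ≠ 0) : v ∈ N.classOf y := by
  rw [colF] at h
  by_cases hin : N.inRate κ y v = 0
  · rw [hin, zero_sub, neg_ne_zero] at h
    have hvy : v = y := by by_contra hc; rw [if_neg hc] at h; exact h rfl
    rw [if_pos hvy] at h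
    subst hvy
    have : v ∈ N.sources := by
      by_contra hs; exact h (outRate_eq_zero hs)
    exact self_mem_classOf (sources_subset_complexes N this)
  · rw [inRate_eq] at hin
    have hr : (y, v) ∈ N.reactions := by
      by_contra hc; rw [if_neg hc] at hin; exact hin rfl
    exact mem_classOf.2 ⟨snd_mem_complexes hr, linked_of_reaction hr⟩

lemma colF_eq_zero_of_not_mem_classOf {κ : Cplx n × Cplx n → ℝ} {y v : Cplx n}
    (h : v ∉ N.classOf y) : N.colF κ y v = 0 := by
  by_contra hc; exact h (mem_classOf_of_colF_ne hc)

lemma colF_eq_zero_of_not_mem_complexes {κ : Cplx n × Cplx n → ℝ} {y v : Cplx n}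
    (h : v ∉ N.complexes) : N.colF κ y v = 0 :=
  colF_eq_zero_of_not_mem_classOf (fun hc => h (classOf_subset N y hc))

/-- The fundamental identity `Φ(col y) = w_y`. -/
lemma sum_colF_smul {κ : Cplx n × Cplx n → ℝ} {y : Cplx n} (hy : y ∈ N.complexes) :
    ∑ v ∈ N.complexes, N.colF κ y v • v = N.netVector κ y := by
  have h1 : ∑ v ∈ N.complexes, N.inRate κ y v • v = ∑ r ∈ N.reactionsFrom y, κ r • r.2 := by
    rw [← Finset.sum_fiberwise_of_maps_to
      (g := fun r : Cplx n × Cplx n => r.2) (t := N.complexes)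
      (fun r hr => snd_mem_complexes (reactionsFrom_subset N y hr)) (fun r => κ r • r.2)]
    refine Finset.sum_congr rfl fun v _ => ?_
    rw [inRate, Finset.sum_smul]
    refine Finset.sum_congr rfl fun r hr => ?_
    rw [(Finset.mem_filter.1 hr).2]
  have h2 : ∑ v ∈ N.complexes, (if v = y then N.outRate κ y else 0) • v
      = N.outRate κ y • y := by
    rw [Finset.sum_congr rfl (fun v _ => by
      rw [ite_smul, zero_smul] : ∀ v ∈ N.complexes, _ = if v = y then N.outRate κ y • v else 0)]
    rw [Finset.sum_ite_eq' N.complexes y (fun v => N.outRate κ y • v), if_pos hy]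
  calc ∑ v ∈ N.complexes, N.colF κ y v • v
      = ∑ v ∈ N.complexes, (N.inRate κ y v • v - (if v = y then N.outRate κ y else 0) • v) := by
        refine Finset.sum_congr rfl fun v _ => ?_
        rw [colF, sub_smul]
    _ = ∑ r ∈ N.reactionsFrom y, κ r • r.2 - N.outRate κ y • y := by
        rw [Finset.sum_sub_distrib, h1, h2]
    _ = N.netVector κ y := by
        rw [netVector, outRate, Finset.sum_smul]
        rw [(Finset.sum_sub_distrib _ _).symm]
        refine Finset.sum_congr rfl fun r hr => ?_
        rw [smul_sub, (mem_reactionsFrom.1 hr).2]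

/-- Class sums of columns vanish. -/
lemma classSum_colF (κ : Cplx n × Cplx n → ℝ) {u : Cplx n} (hu : u ∈ N.complexes) (y : Cplx n) :
    ∑ v ∈ N.classOf u, N.colF κ y v = 0 := by
  have hC : N.classOf u ∈ N.classes := classOf_mem_classes hu
  have h2 : ∑ v ∈ N.classOf u, (if v = y then N.outRate κ y else 0)
      = if y ∈ N.classOf u then N.outRate κ y else 0 :=
    Finset.sum_ite_eq' (N.classOf u) y (fun _ => N.outRate κ y)
  have h1 : ∑ v ∈ N.classOf u, N.inRate κ y v
      = ∑ r ∈ (N.reactionsFrom y).filter (fun r => r.2 ∈ N.classOf u), κ r := by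
    rw [← Finset.sum_fiberwise_eq_sum_filter (N.reactionsFrom y) (N.classOf u)
      (fun r => r.2) κ]
    rfl
  have key : ∀ r ∈ N.reactionsFrom y, (r.2 ∈ N.classOf u ↔ y ∈ N.classOf u) := by
    intro r hr
    rcases mem_reactionsFrom.1 hr with ⟨hrE, hr1⟩
    have hy : y ∈ N.complexes := hr1 ▸ fst_mem_complexes hrE
    have hlink : N.linked y r.2 := hr1 ▸ linked_of_reaction hrE
    exact (mem_class_iff_of_linked hC hlink hy (snd_mem_complexes hrE)).symm
  have hsplit : ∑ v ∈ N.classOf u, N.colF κ y v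
      = ∑ r ∈ (N.reactionsFrom y).filter (fun r => r.2 ∈ N.classOf u), κ r
        - (if y ∈ N.classOf u then N.outRate κ y else 0) := by
    simp only [colF]
    rw [Finset.sum_sub_distrib, h1, h2]
  rw [hsplit]
  by_cases hyC : y ∈ N.classOf u
  · rw [if_pos hyC, Finset.filter_true_of_mem (fun r hr => (key r hr).2 hyC), outRate, sub_self]
  · rw [if_neg hyC, Finset.filter_false_of_mem (fun r hr h => hyC ((key r hr).1 h)),
      Finset.sum_empty, sub_zero]

/-! ### Chunk E : balance and the propagation principle -/

lemma sum_mul_inRate {κ : Cplx n × Cplx n → ℝ} {a : Cplx n → ℝ} {Y : Finset (Cplx n)}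
    (hsupp : ∀ z ∉ Y, a z = 0) (v : Cplx n) :
    ∑ z ∈ Y, a z * N.inRate κ z v
      = ∑ r ∈ N.reactions.filter (fun r => r.2 = v), κ r * a r.1 := by
  have h1 : ∀ z ∈ Y, a z * N.inRate κ z v
      = ∑ r ∈ (N.reactions.filter (fun r => r.2 = v)).filter (fun r => r.1 = z),
          κ r * a r.1 := by
    intro z _
    rw [inRate, Finset.mul_sum]
    rw [show (N.reactionsFrom z).filter (fun r => r.2 = v)
        = (N.reactions.filter (fun r => r.2 = v)).filter (fun r => r.1 = z) by
      ext r
      simp only [Finset.mem_filter, mem_reactionsFrom]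
      tauto]
    refine Finset.sum_congr rfl fun r hr => ?_
    rw [(Finset.mem_filter.1 hr).2]
    ring
  rw [Finset.sum_congr rfl h1]
  rw [Finset.sum_fiberwise_eq_sum_filter (N.reactions.filter (fun r => r.2 = v)) Y
    (fun r => r.1) (fun r => κ r * a r.1)]
  refine Finset.sum_filter_of_ne fun r _ h => ?_
  by_contra hY
  rw [hsupp r.1 hY, mul_zero] at h
  exact h rfl

lemma balanced_of_colF_rel {κ : Cplx n × Cplx n → ℝ} {a : Cplx n → ℝ} {Y : Finset (Cplx n)}
    (hsupp : ∀ z ∉ Y, a z = 0)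
    (h : ∀ v, ∑ z ∈ Y, a z * N.colF κ z v = 0) : N.Balanced κ a := by
  intro v
  have hv := h v
  simp only [colF, mul_sub, mul_ite, mul_zero] at hv
  rw [Finset.sum_sub_distrib] at hv
  have h2 : ∑ z ∈ Y, (if v = z then a z * N.outRate κ z else 0)
      = if v ∈ Y then a v * N.outRate κ v else 0 :=
    Finset.sum_ite_eq Y v (fun z => a z * N.outRate κ z)
  rw [h2, sum_mul_inRate hsupp v] at hv
  have h3 : (if v ∈ Y then a v * N.outRate κ v else 0) = a v * N.outRate κ v := by
    split_ifs with hY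
    · rfl
    · rw [hsupp v hY, zero_mul]
  rw [h3] at hv
  linarith

lemma balanced_neg {κ : Cplx n × Cplx n → ℝ} {a : Cplx n → ℝ} (hb : N.Balanced κ a) :
    N.Balanced κ (fun v => - a v) := by
  intro v
  have := hb v
  simp only [mul_neg, neg_mul, Finset.sum_neg_distrib]
  linarith

lemma balanced_posPart {κ : Cplx n × Cplx n → ℝ} (hκ : N.PosRates κ) {a : Cplx n → ℝ}
    (hb : N.Balanced κ a) : N.Balanced κ (fun v => max (a v) 0) := by
  set p : Cplx n → ℝ := fun v => max (a v) 0 with hp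
  set s : Cplx n → ℝ := fun v =>
    (∑ r ∈ N.reactions.filter (fun r => r.2 = v), κ r * p r.1) - p v * N.outRate κ v with hs
  have claim0 : ∀ v, 0 ≤ s v := by
    intro v
    rcases le_or_gt (a v) 0 with hav | hav
    · have : p v = 0 := max_eq_right hav
      simp only [hs, this, zero_mul, sub_zero]
      refine Finset.sum_nonneg fun r hr => ?_
      have hrE := Finset.mem_of_mem_filter r hr
      exact mul_nonneg (le_of_lt (hκ r hrE)) (le_max_right _ _)
    · have hpv : p v = a v := max_eq_left (le_of_lt hav)
      have := hb v
      simp only [hs, hpv]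
      rw [← this]
      rw [← Finset.sum_sub_distrib]
      refine Finset.sum_nonneg fun r hr => ?_
      have hrE := Finset.mem_of_mem_filter r hr
      rw [← mul_sub]
      exact mul_nonneg (le_of_lt (hκ r hrE)) (by simp [hp, le_max_left])
  have hsum1 : ∑ v ∈ N.complexes, ∑ r ∈ N.reactions.filter (fun r => r.2 = v), κ r * p r.1
      = ∑ r ∈ N.reactions, κ r * p r.1 :=
    Finset.sum_fiberwise_of_maps_to (fun r hr => snd_mem_complexes hr) _
  have hsum2 : ∑ v ∈ N.complexes, p v * N.outRate κ v = ∑ r ∈ N.reactions, κ r * p r.1 := by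
    have : ∀ v ∈ N.complexes, p v * N.outRate κ v
        = ∑ r ∈ N.reactions.filter (fun r => r.1 = v), κ r * p r.1 := by
      intro v _
      rw [outRate, Finset.mul_sum]
      rw [show N.reactionsFrom v = N.reactions.filter (fun r => r.1 = v) from rfl]
      refine Finset.sum_congr rfl fun r hr => ?_
      rw [(Finset.mem_filter.1 hr).2]
      ring
    rw [Finset.sum_congr rfl this]
    exact Finset.sum_fiberwise_of_maps_to (fun r hr => fst_mem_complexes hr) _
  have claim1 : ∑ v ∈ N.complexes, s v = 0 := by
    simp only [hs]
    rw [Finset.sum_sub_distrib, hsum1, hsum2, sub_self]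
  have hzero : ∀ v ∈ N.complexes, s v = 0 := by
    intro v hv
    have := (Finset.sum_eq_zero_iff_of_nonneg (fun v _ => claim0 v)).1 claim1
    exact this v hv
  intro v
  by_cases hv : v ∈ N.complexes
  · have := hzero v hv
    simp only [hs] at this
    linarith
  · have hfil : N.reactions.filter (fun r => r.2 = v) = ∅ := by
      rw [Finset.filter_eq_empty_iff]
      intro r hr h
      exact hv (h ▸ snd_mem_complexes hr)
    have hout : N.outRate κ v = 0 :=
      outRate_eq_zero (fun hsrc => hv (sources_subset_complexes N hsrc))
    rw [hfil, Finset.sum_empty, hout, mul_zero]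

lemma balanced_zero_of_nonneg_path {κ : Cplx n × Cplx n → ℝ} (hκ : N.PosRates κ)
    {a : Cplx n → ℝ} (hb : N.Balanced κ a) (hnn : ∀ v, 0 ≤ a v) {z v₀ : Cplx n}
    (hz : Relation.ReflTransGen (fun u v => (u, v) ∈ N.reactions) z v₀)
    (h0 : a v₀ = 0) : a z = 0 := by
  induction hz using Relation.ReflTransGen.head_induction_on with
  | refl => exact h0
  | head hedge _ ih =>
    rename_i x c _
    have hbal := hb c
    rw [ih, zero_mul] at hbal
    have hterms : ∀ r ∈ N.reactions.filter (fun r => r.2 = c), 0 ≤ κ r * a r.1 :=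
      fun r hr => mul_nonneg (le_of_lt (hκ r (Finset.mem_of_mem_filter r hr))) (hnn _)
    have hmem : (x, c) ∈ N.reactions.filter (fun r => r.2 = c) :=
      Finset.mem_filter.2 ⟨hedge, rfl⟩
    have := (Finset.sum_eq_zero_iff_of_nonneg hterms).1 hbal (x, c) hmem
    rcases mul_eq_zero.1 this with h | h
    · exact absurd h (ne_of_gt (hκ _ hedge))
    · exact h

/-- The key propagation principle: a balanced assignment vanishing at one point of a
linkage class of a weakly reversible network vanishes on the whole class. -/
lemma balanced_vanish (hN : N.WeaklyReversible) {κ : Cplx n × Cplx n → ℝ} (hκ : N.PosRates κ)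
    {a : Cplx n → ℝ} (hb : N.Balanced κ a) {v₀ z : Cplx n} (h0 : a v₀ = 0)
    (hlink : N.linked z v₀) : a z = 0 := by
  have hpath := hN.dirPath hlink
  have hp : max (a z) 0 = 0 :=
    balanced_zero_of_nonneg_path hκ (balanced_posPart hκ hb) (fun v => le_max_right _ _)
      hpath (by rw [h0]; exact max_self 0)
  have hq : max (- a z) 0 = 0 :=
    balanced_zero_of_nonneg_path hκ (balanced_posPart hκ (balanced_neg hb))
      (fun v => le_max_right _ _) hpath (by rw [h0]; simpa using max_self 0)
  have h1 : a z ≤ 0 := by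
    by_contra h
    push_neg at h
    rw [max_eq_left (le_of_lt h)] at hp
    exact (ne_of_gt h) hp
  have h2 : 0 ≤ a z := by
    by_contra h
    push_neg at h
    rw [max_eq_left (by linarith)] at hq
    linarith
  linarith

/-! ### Chunk F : deficiency zero gives the kernel property -/

lemma classes_subset_complexes {C : Finset (Cplx n)} (hC : C ∈ N.classes) :
    C ⊆ N.complexes := by
  rcases classes_eq_classOf hC with ⟨y, _, rfl⟩
  exact classOf_subset N y

def rep (C : Finset (Cplx n)) : Cplx n := if h : C.Nonempty then h.choose else 0

lemma rep_mem {C : Finset (Cplx n)} (h : C.Nonempty) : rep C ∈ C := by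
  rw [rep, dif_pos h]; exact h.choose_spec

/-- Evaluation of functions on the complexes, as a linear map to `ℝ^n`. -/
def PhiW (N : ReactionNetwork n) : (↥N.complexes → ℝ) →ₗ[ℝ] Cplx n where
  toFun f := ∑ v ∈ N.complexes.attach, f v • (v : Cplx n)
  map_add' f g := by simp [add_smul, Finset.sum_add_distrib]
  map_smul' c f := by simp [mul_smul, Finset.smul_sum]

/-- The per-class sums, as a linear map. -/
def sigmaW (N : ReactionNetwork n) : (↥N.complexes → ℝ) →ₗ[ℝ] (↥N.classes → ℝ) where
  toFun f := fun C => ∑ v ∈ N.complexes.attach,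
    if (v : Cplx n) ∈ (C : Finset (Cplx n)) then f v else 0
  map_add' f g := by
    funext C
    simp only [Pi.add_apply]
    rw [← Finset.sum_add_distrib]
    exact Finset.sum_congr rfl fun v _ => by split_ifs <;> simp
  map_smul' c f := by
    funext C
    simp only [Pi.smul_apply, RingHom.id_apply, smul_eq_mul, Finset.mul_sum]
    exact Finset.sum_congr rfl fun v _ => by split_ifs <;> simp

lemma PhiW_factor (g : Cplx n → ℝ) :
    N.PhiW (fun v : ↥N.complexes => g ↑v) = ∑ u ∈ N.complexes, g u • u := by
  have h0 : N.PhiW (fun v : ↥N.complexes => g ↑v)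
      = ∑ v ∈ N.complexes.attach, g ↑v • (↑v : Cplx n) := rfl
  rw [h0]
  exact Finset.sum_attach N.complexes (fun u => g u • u)

lemma sigmaW_factor (g : Cplx n → ℝ) (C : ↥N.classes) :
    N.sigmaW (fun v : ↥N.complexes => g ↑v) C = ∑ u ∈ (C : Finset (Cplx n)), g u := by
  have h0 : N.sigmaW (fun v : ↥N.complexes => g ↑v) C
      = ∑ v ∈ N.complexes.attach,
          (if (↑v : Cplx n) ∈ (C : Finset (Cplx n)) then g ↑v else 0) := rfl
  rw [h0]
  rw [Finset.sum_attach N.complexes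
    (fun u => if u ∈ (C : Finset (Cplx n)) then g u else 0), ← Finset.sum_filter,
    Finset.filter_mem_eq_inter, Finset.inter_eq_right.2 (classes_subset_complexes C.2)]

lemma W_factor (f : ↥N.complexes → ℝ) :
    f = fun v : ↥N.complexes =>
      (fun u => if h : u ∈ N.complexes then f ⟨u, h⟩ else 0) (↑v : Cplx n) := by
  funext v
  show f v = dite ((↑v : Cplx n) ∈ N.complexes) (fun h => f ⟨↑v, h⟩) (fun _ => 0)
  rw [dif_pos v.2]

lemma sigmaW_surjective (N : ReactionNetwork n) : Function.Surjective N.sigmaW := by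
  have single_mem : ∀ C₀ : ↥N.classes,
      (fun C : ↥N.classes => if C₀ = C then (1:ℝ) else 0) ∈ LinearMap.range N.sigmaW := by
    intro C₀
    have hne : (↑C₀ : Finset (Cplx n)).Nonempty := classes_nonempty C₀.2
    set g : Cplx n → ℝ := fun u => if u = rep (↑C₀ : Finset (Cplx n)) then (1:ℝ) else 0
      with hgdef
    refine ⟨fun v : ↥N.complexes => g ↑v, ?_⟩
    funext C
    rw [sigmaW_factor g C]
    simp only [hgdef]
    rw [Finset.sum_ite_eq' (C : Finset (Cplx n)) (rep ↑C₀) (fun _ => (1:ℝ))]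
    by_cases h : C₀ = C
    · subst h
      rw [if_pos (rep_mem hne), if_pos rfl]
    · rw [if_neg h, if_neg]
      intro hmem
      exact h (Subtype.ext (classes_eq_of_mem_mem C₀.2 C.2 (rep_mem hne) hmem))
  intro t
  have ht : t ∈ LinearMap.range N.sigmaW := by
    rw [pi_eq_sum_univ t]
    exact Submodule.sum_mem _ fun C₀ _ => Submodule.smul_mem _ _ (single_mem C₀)
  exact ht

lemma linked_sub_mem {u z : Cplx n} (h : N.linked u z) : z - u ∈ N.stoichSubspace := by
  induction h with
  | refl => simp
  | tail hst hr ih =>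
    rename_i b c
    have hbc : c - b ∈ N.stoichSubspace := by
      rcases hr with hr | hr
      · exact Submodule.subset_span ⟨(b, c), hr, rfl⟩
      · have : b - c ∈ N.stoichSubspace := Submodule.subset_span ⟨(c, b), hr, rfl⟩
        have := Submodule.neg_mem _ this
        rwa [neg_sub] at this
    have := Submodule.add_mem _ hbc ih
    rwa [sub_add_sub_cancel] at this

lemma sum_smul_mem_stoich {g : Cplx n → ℝ}
    (hg : ∀ u ∈ N.complexes, ∑ v ∈ N.classOf u, g v = 0) :
    (∑ u ∈ N.complexes, g u • u) ∈ N.stoichSubspace := by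
  have hsplit : ∑ u ∈ N.complexes, g u • u
      = ∑ u ∈ N.complexes, g u • (u - rep (N.classOf u))
        + ∑ u ∈ N.complexes, g u • rep (N.classOf u) := by
    rw [← Finset.sum_add_distrib]
    refine Finset.sum_congr rfl fun u _ => ?_
    rw [← smul_add, sub_add_cancel]
  rw [hsplit]
  refine Submodule.add_mem _ ?_ ?_
  · refine Submodule.sum_mem _ fun u hu => Submodule.smul_mem _ _ ?_
    have hne : (N.classOf u).Nonempty := ⟨u, self_mem_classOf hu⟩
    exact linked_sub_mem (linked_symm (linked_of_mem_classOf (rep_mem hne)))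
  · have hzero : ∑ u ∈ N.complexes, g u • rep (N.classOf u) = 0 := by
      rw [← Finset.sum_fiberwise_of_maps_to
        (g := N.classOf) (t := N.classes) (fun u hu => classOf_mem_classes hu)
        (fun u => g u • rep (N.classOf u))]
      refine Finset.sum_eq_zero fun C hC => ?_
      rcases classes_eq_classOf hC with ⟨y, hy, rfl⟩
      rw [fiber_classOf hy]
      have : ∀ v ∈ N.classOf y, g v • rep (N.classOf v) = g v • rep (N.classOf y) := by
        intro v hv
        rw [classOf_eq_of_mem hv]
      rw [Finset.sum_congr rfl this, ← Finset.sum_smul, hg y hy, zero_smul]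
    rw [hzero]
    exact Submodule.zero_mem _

/-- **Deficiency zero kernel property**: under deficiency zero, a coefficient vector
supported on the complexes whose class sums vanish and whose weighted sum of complexes
vanishes must be identically zero. -/
theorem kernelProp (hδ : N.DeficiencyZero) {a : Cplx n → ℝ}
    (hsupp : ∀ v ∉ N.complexes, a v = 0)
    (hPhi : ∑ v ∈ N.complexes, a v • v = 0)
    (hclass : ∀ u ∈ N.complexes, ∑ v ∈ N.classOf u, a v = 0) :
    ∀ v, a v = 0 := by
  classical
  -- the kernel of the class-sums map
  set A : Submodule ℝ (↥N.complexes → ℝ) := LinearMap.ker N.sigmaW with hA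
  set Ψ : ↥A →ₗ[ℝ] Cplx n := N.PhiW.domRestrict A with hΨ
  -- the range of Ψ is the stoichiometric subspace
  have hrange : LinearMap.range Ψ = N.stoichSubspace := by
    apply le_antisymm
    · rintro _ ⟨⟨f, hf⟩, rfl⟩
      set g : Cplx n → ℝ := fun u => if h : u ∈ N.complexes then f ⟨u, h⟩ else 0 with hgdef
      have hfg : f = fun v : ↥N.complexes => g ↑v := W_factor f
      have hΨval : Ψ ⟨f, hf⟩ = ∑ u ∈ N.complexes, g u • u := by
        show N.PhiW f = _
        rw [hfg, PhiW_factor g]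
      rw [hΨval]
      refine sum_smul_mem_stoich fun u hu => ?_
      have hker : N.sigmaW f = 0 := hf
      have h2 := congrFun hker ⟨N.classOf u, classOf_mem_classes hu⟩
      rw [hfg, sigmaW_factor g] at h2
      simpa using h2
    · rw [stoichSubspace]
      rw [Submodule.span_le]
      rintro d ⟨r, hr, rfl⟩
      set g : Cplx n → ℝ :=
        fun u => (if u = r.2 then (1:ℝ) else 0) - (if u = r.1 then (1:ℝ) else 0) with hgdef
      have hgf : (fun v : ↥N.complexes => g ↑v) ∈ A := by
        show N.sigmaW _ = 0
        funext C
        show N.sigmaW (fun v : ↥N.complexes => g ↑v) C = (0 : ℝ)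
        rw [sigmaW_factor g C]
        have h1 : ∑ u ∈ (C : Finset (Cplx n)), g u
            = (if r.2 ∈ (C : Finset (Cplx n)) then (1:ℝ) else 0)
              - (if r.1 ∈ (C : Finset (Cplx n)) then (1:ℝ) else 0) := by
          simp only [hgdef]
          rw [Finset.sum_sub_distrib,
            Finset.sum_ite_eq' (C : Finset (Cplx n)) r.2 (fun _ => (1:ℝ)),
            Finset.sum_ite_eq' (C : Finset (Cplx n)) r.1 (fun _ => (1:ℝ))]
        rw [h1]
        have hiff : r.1 ∈ (C : Finset (Cplx n)) ↔ r.2 ∈ (C : Finset (Cplx n)) :=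
          mem_class_iff_of_linked C.2 (linked_of_reaction hr) (fst_mem_complexes hr)
            (snd_mem_complexes hr)
        by_cases h : r.1 ∈ (C : Finset (Cplx n))
        · rw [if_pos h, if_pos (hiff.1 h), sub_self]
        · rw [if_neg h, if_neg (fun hc => h (hiff.2 hc)), sub_self]
      refine ⟨⟨_, hgf⟩, ?_⟩
      show N.PhiW (fun v : ↥N.complexes => g ↑v) = r.2 - r.1
      rw [PhiW_factor g]
      simp only [hgdef]
      have : ∀ u ∈ N.complexes,
          ((if u = r.2 then (1:ℝ) else 0) - (if u = r.1 then (1:ℝ) else 0)) • u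
          = (if u = r.2 then u else 0) - (if u = r.1 then u else 0) := by
        intro u _
        split_ifs <;> simp
      rw [Finset.sum_congr rfl this, Finset.sum_sub_distrib,
        Finset.sum_ite_eq' N.complexes r.2 (fun u => u),
        Finset.sum_ite_eq' N.complexes r.1 (fun u => u),
        if_pos (snd_mem_complexes hr), if_pos (fst_mem_complexes hr)]
  -- rank computations
  have hrankW : Module.finrank ℝ (↥N.complexes → ℝ) = N.complexes.card := by
    rw [Module.finrank_pi, Fintype.card_coe]
  have hrankT : Module.finrank ℝ (↥N.classes → ℝ) = N.classes.card := by
    rw [Module.finrank_pi, Fintype.card_coe]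
  have hrankA : N.classes.card + Module.finrank ℝ ↥A = N.complexes.card := by
    have := LinearMap.finrank_range_add_finrank_ker N.sigmaW
    rw [LinearMap.range_eq_top.2 (sigmaW_surjective N), finrank_top, hrankT, hrankW] at this
    exact this
  have hrankΨ : Module.finrank ℝ (LinearMap.range Ψ) + Module.finrank ℝ (LinearMap.ker Ψ)
      = Module.finrank ℝ ↥A := LinearMap.finrank_range_add_finrank_ker Ψ
  have hδ' : N.complexes.card = N.classes.card + Module.finrank ℝ N.stoichSubspace := by
    rw [hδ, numLinkageClasses_eq_card_classes]
  have hkerzero : Module.finrank ℝ (LinearMap.ker Ψ) = 0 := by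
    rw [hrange] at hrankΨ
    omega
  have hker : LinearMap.ker Ψ = ⊥ := Submodule.finrank_eq_zero.1 hkerzero
  -- apply to our vector
  set f : ↥N.complexes → ℝ := fun v => a ↑v with hf
  have hfA : f ∈ A := by
    show N.sigmaW f = 0
    funext C
    show N.sigmaW (fun v : ↥N.complexes => a ↑v) C = (0 : ℝ)
    rw [sigmaW_factor a C]
    rcases classes_eq_classOf C.2 with ⟨y, hy, hCy⟩
    have hCC : (C : Finset (Cplx n)) = N.classOf y := hCy
    rw [hCC]
    exact hclass y hy
  have hΨf : Ψ ⟨f, hfA⟩ = 0 := by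
    show N.PhiW (fun v : ↥N.complexes => a ↑v) = 0
    rw [PhiW_factor a]
    exact hPhi
  have : (⟨f, hfA⟩ : ↥A) ∈ LinearMap.ker Ψ := hΨf
  rw [hker, Submodule.mem_bot] at this
  have hf0 : f = 0 := congrArg Subtype.val this
  intro v
  by_cases hv : v ∈ N.complexes
  · exact congrFun hf0 ⟨v, hv⟩
  · exact hsupp v hv

/-! ### Chunk G : linear independence of exponentials and monomials -/

open Real in
/-- Exponential functions with distinct rates are linearly independent. -/
lemma exp_indep (s : Finset ℝ) (c : ℝ → ℝ)
    (h : ∀ t : ℝ, ∑ a ∈ s, c a * Real.exp (a * t) = 0) : ∀ a ∈ s, c a = 0 := by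
  classical
  induction s using Finset.strongInduction with
  | _ s ih =>
    rcases Finset.eq_empty_or_nonempty s with rfl | hs
    · intro a ha; exact absurd ha (Finset.notMem_empty a)
    · set M := s.max' hs with hM
      have hMs : M ∈ s := s.max'_mem hs
      -- the limit of the normalized sum is c M
      have hlim : Filter.Tendsto (fun t => ∑ a ∈ s, c a * Real.exp ((a - M) * t))
          Filter.atTop (nhds (∑ a ∈ s, if a = M then c a else 0)) := by
        refine tendsto_finset_sum _ fun a ha => ?_
        by_cases haM : a = M
        · subst haM
          simp only [sub_self, zero_mul, Real.exp_zero, mul_one, if_pos rfl]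
          exact tendsto_const_nhds
        · rw [if_neg haM]
          have haM' : a - M < 0 := by
            have := s.le_max' a ha
            rw [← hM] at this
            cases lt_or_eq_of_le this with
            | inl h' => linarith
            | inr h' => exact absurd h' haM
          have h1 : Filter.Tendsto (fun t : ℝ => (a - M) * t) Filter.atTop Filter.atBot := by
            exact Filter.Tendsto.const_mul_atTop_of_neg haM' Filter.tendsto_id
          have h2 : Filter.Tendsto (fun t => Real.exp ((a - M) * t)) Filter.atTop (nhds 0) :=
            Real.tendsto_exp_atBot.comp h1
          simpa using h2.const_mul (c a)
      have hzero : ∀ t : ℝ, ∑ a ∈ s, c a * Real.exp ((a - M) * t) = 0 := by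
        intro t
        have : ∑ a ∈ s, c a * Real.exp ((a - M) * t)
            = (∑ a ∈ s, c a * Real.exp (a * t)) * Real.exp (-M * t) := by
          rw [Finset.sum_mul]
          refine Finset.sum_congr rfl fun a _ => ?_
          rw [mul_assoc, ← Real.exp_add]
          ring_nf
        rw [this, h t, zero_mul]
      have hcM : c M = 0 := by
        have h0 : Filter.Tendsto (fun t => ∑ a ∈ s, c a * Real.exp ((a - M) * t))
            Filter.atTop (nhds 0) := by
          simp only [hzero]
          exact tendsto_const_nhds
        have := tendsto_nhds_unique hlim h0
        rwa [Finset.sum_ite_eq' s M c, if_pos hMs] at this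
      have herase : ∀ a ∈ s.erase M, c a = 0 := by
        refine ih (s.erase M) (Finset.erase_ssubset hMs) fun t => ?_
        have := h t
        rw [← Finset.add_sum_erase s _ hMs, hcM, zero_mul, zero_add] at this
        exact this
      intro a ha
      by_cases haM : a = M
      · rw [haM]; exact hcM
      · exact herase a (Finset.mem_erase.2 ⟨haM, ha⟩)

/-- A direction separating a finite set of points. -/
lemma exists_separating (S : Finset (Cplx n)) :
    ∃ v : Cplx n, ∀ y ∈ S, ∀ y' ∈ S, (∑ i, v i * y i) = (∑ i, v i * y' i) → y = y' := by
  classical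
  set P : MvPolynomial (Fin n) ℝ :=
    ∏ p ∈ (S ×ˢ S).filter (fun p => p.1 ≠ p.2),
      (∑ i, MvPolynomial.C (p.1 i - p.2 i) * MvPolynomial.X i) with hP
  have hfac : ∀ p ∈ (S ×ˢ S).filter (fun p : Cplx n × Cplx n => p.1 ≠ p.2),
      (∑ i, MvPolynomial.C (p.1 i - p.2 i) * MvPolynomial.X i : MvPolynomial (Fin n) ℝ)
        ≠ 0 := by
    intro p hp
    rcases Finset.mem_filter.1 hp with ⟨_, hne⟩
    have : ∃ i, p.1 i ≠ p.2 i := by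
      by_contra hc
      push_neg at hc
      exact hne (funext hc)
    rcases this with ⟨i, hi⟩
    intro hzero
    have := congrArg (MvPolynomial.eval (Pi.single i 1 : Fin n → ℝ)) hzero
    simp only [MvPolynomial.eval_sum, MvPolynomial.eval_mul, MvPolynomial.eval_C,
      MvPolynomial.eval_X, MvPolynomial.eval_zero] at this
    rw [Finset.sum_eq_single i (fun j _ hj => by
        rw [Pi.single_eq_of_ne hj, mul_zero]) (fun h => absurd (Finset.mem_univ i) h)] at this
    rw [Pi.single_eq_same, mul_one] at this
    exact hi (sub_eq_zero.1 this)
  have hPne : P ≠ 0 := Finset.prod_ne_zero_iff.2 hfac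
  have hev : ∃ v : Cplx n, MvPolynomial.eval v P ≠ 0 := by
    by_contra hc
    push_neg at hc
    apply hPne
    apply MvPolynomial.funext
    intro v
    rw [hc v]
    simp
  rcases hev with ⟨v, hv⟩
  refine ⟨v, fun y hy y' hy' heq => ?_⟩
  by_contra hne
  have hmem : (y, y') ∈ (S ×ˢ S).filter (fun p : Cplx n × Cplx n => p.1 ≠ p.2) :=
    Finset.mem_filter.2 ⟨Finset.mem_product.2 ⟨hy, hy'⟩, hne⟩
  rw [hP, MvPolynomial.eval_prod] at hv
  have := Finset.prod_ne_zero_iff.1 hv (y, y') hmem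
  apply this
  simp only [MvPolynomial.eval_sum, MvPolynomial.eval_mul, MvPolynomial.eval_C,
    MvPolynomial.eval_X]
  have : ∑ i, (y i - y' i) * v i = (∑ i, v i * y i) - ∑ i, v i * y' i := by
    rw [← Finset.sum_sub_distrib]
    exact Finset.sum_congr rfl fun i _ => by ring
  rw [this, heq, sub_self]

/-- Linear independence of monomial functions on the positive orthant. -/
theorem monomial_indep (S : Finset (Cplx n)) (c : Cplx n → Cplx n)
    (h : ∀ x : Cplx n, (∀ i, 0 < x i) → ∑ y ∈ S, monomial x y • c y = 0) :
    ∀ y ∈ S, c y = 0 := by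
  classical
  rcases exists_separating S with ⟨v, hv⟩
  set d : Cplx n → ℝ := fun y => ∑ i, v i * y i with hd
  have hmono : ∀ (t : ℝ) (y : Cplx n),
      monomial (fun i => Real.exp (v i * t)) y = Real.exp (d y * t) := by
    intro t y
    rw [monomial]
    have : ∀ i, Real.exp (v i * t) ^ y i = Real.exp (v i * t * y i) := by
      intro i
      rw [← Real.exp_mul]
    rw [Finset.prod_congr rfl (fun i _ => this i), ← Real.exp_sum]
    congr 1
    rw [hd, Finset.sum_mul]
    exact Finset.sum_congr rfl fun i _ => by ring
  intro y₀ hy₀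
  funext j
  have hexp : ∀ a ∈ S.image d, (∑ z ∈ S.filter (fun z => d z = a), c z j) = 0 := by
    apply exp_indep (S.image d) (fun a => ∑ z ∈ S.filter (fun z => d z = a), c z j)
    intro t
    have hsum := h (fun i => Real.exp (v i * t)) (fun i => Real.exp_pos _)
    have hj := congrFun hsum j
    simp only [Finset.sum_apply, Pi.smul_apply, smul_eq_mul, Pi.zero_apply] at hj
    rw [← Finset.sum_fiberwise_of_maps_to
      (g := d) (t := S.image d) (fun z hz => Finset.mem_image_of_mem d hz)
      (fun z => monomial (fun i => Real.exp (v i * t)) z * c z j)] at hj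
    rw [← hj]
    refine Finset.sum_congr rfl fun a _ => ?_
    rw [Finset.sum_mul]
    refine Finset.sum_congr rfl fun z hz => ?_
    rw [hmono t z, (Finset.mem_filter.1 hz).2]
    ring
  have hfib : S.filter (fun z => d z = d y₀) = {y₀} := by
    ext z
    simp only [Finset.mem_filter, Finset.mem_singleton]
    constructor
    · rintro ⟨hz, he⟩
      exact hv z hz y₀ hy₀ he
    · rintro rfl
      exact ⟨hy₀, rfl⟩
  have := hexp (d y₀) (Finset.mem_image_of_mem d hy₀)
  rw [hfib, Finset.sum_singleton] at this
  simpa using this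

/-! ### Chunk H : net vectors are determined by the vector field -/

lemma massAction_eq_sum_sources (κ : Cplx n × Cplx n → ℝ) (x : Cplx n) :
    N.massAction κ x = ∑ y ∈ N.sources, monomial x y • N.netVector κ y := by
  rw [massAction, ← Finset.sum_fiberwise_of_maps_to
    (g := fun r : Cplx n × Cplx n => r.1) (t := N.sources)
    (fun r hr => Finset.mem_image_of_mem _ hr)
    (fun r => (κ r * monomial x r.1) • (r.2 - r.1))]
  refine Finset.sum_congr rfl fun y _ => ?_
  rw [netVector, Finset.smul_sum]
  have hre : N.reactions.filter (fun r => r.1 = y) = N.reactionsFrom y := rfl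
  rw [hre]
  refine Finset.sum_congr rfl fun r hr => ?_
  rw [(mem_reactionsFrom.1 hr).2, mul_comm, mul_smul]

lemma netVector_eq_of_massAction_eq {N N' : ReactionNetwork n}
    {κ κ' : Cplx n × Cplx n → ℝ}
    (h : ∀ x : Cplx n, (∀ i, 0 < x i) → N.massAction κ x = N'.massAction κ' x) :
    ∀ y, N.netVector κ y = N'.netVector κ' y := by
  classical
  set U := N.sources ∪ N'.sources with hU
  have key : ∀ x : Cplx n, (∀ i, 0 < x i) →
      ∑ y ∈ U, monomial x y • (N.netVector κ y - N'.netVector κ' y) = 0 := by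
    intro x hx
    have h1 : N.massAction κ x = ∑ y ∈ U, monomial x y • N.netVector κ y := by
      rw [massAction_eq_sum_sources]
      refine Finset.sum_subset Finset.subset_union_left fun y _ hyn => ?_
      rw [netVector_eq_zero hyn, smul_zero]
    have h2 : N'.massAction κ' x = ∑ y ∈ U, monomial x y • N'.netVector κ' y := by
      rw [massAction_eq_sum_sources]
      refine Finset.sum_subset Finset.subset_union_right fun y _ hyn => ?_
      rw [netVector_eq_zero hyn, smul_zero]
    have h3 := h x hx
    rw [h1, h2] at h3
    calc ∑ y ∈ U, monomial x y • (N.netVector κ y - N'.netVector κ' y)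
        = ∑ y ∈ U, (monomial x y • N.netVector κ y - monomial x y • N'.netVector κ' y) := by
          refine Finset.sum_congr rfl fun y _ => smul_sub _ _ _
      _ = ∑ y ∈ U, monomial x y • N.netVector κ y
            - ∑ y ∈ U, monomial x y • N'.netVector κ' y := Finset.sum_sub_distrib _ _
      _ = 0 := by rw [← h3, sub_self]
  have hind := monomial_indep U (fun y => N.netVector κ y - N'.netVector κ' y) key
  intro y
  by_cases hy : y ∈ U
  · have := hind y hy
    exact sub_eq_zero.1 this
  · rw [Finset.mem_union, not_or] at hy
    rw [netVector_eq_zero hy.1, netVector_eq_zero hy.2]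

/-- In a deficiency-zero network, the net vector of a source is nonzero. -/
lemma netVector_ne_zero (hδ : N.DeficiencyZero) {κ : Cplx n × Cplx n → ℝ}
    (hκ : N.PosRates κ) {y : Cplx n} (hy : y ∈ N.sources) : N.netVector κ y ≠ 0 := by
  intro h0
  have hyC : y ∈ N.complexes := sources_subset_complexes N hy
  have hall := N.kernelProp hδ (a := N.colF κ y)
    (fun v hv => colF_eq_zero_of_not_mem_complexes hv)
    (by rw [sum_colF_smul hyC, h0])
    (fun u hu => classSum_colF κ hu y)
  rcases Finset.mem_image.1 hy with ⟨r, hr, hr1⟩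
  have hne : r.2 ≠ y := fun hh => N.no_loops r hr (hr1.trans hh.symm)
  have h2 := hall r.2
  rw [colF_apply_ne hne] at h2
  have hry : (y, r.2) = r := by
    rw [← hr1]
  rw [hry, if_pos hr] at h2
  exact ne_of_gt (hκ r hr) h2

lemma sources_eq_of_netVector_eq {N N' : ReactionNetwork n} {κ κ' : Cplx n × Cplx n → ℝ}
    (hδ : N.DeficiencyZero) (hδ' : N'.DeficiencyZero)
    (hκ : N.PosRates κ) (hκ' : N'.PosRates κ')
    (hw : ∀ y, N.netVector κ y = N'.netVector κ' y) : N.sources = N'.sources := by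
  ext y
  constructor
  · intro hy
    by_contra hy'
    exact netVector_ne_zero hδ hκ hy ((hw y).trans (netVector_eq_zero hy'))
  · intro hy
    by_contra hy'
    exact netVector_ne_zero hδ' hκ' hy ((hw y).symm.trans (netVector_eq_zero hy'))

/-! ### Chunk K : linkage classes of two WR0 realizations coincide -/

/-- Sum of coordinates as a linear functional on functions on a finset. -/
def sumFL (D : Finset (Cplx n)) : (↥D → ℝ) →ₗ[ℝ] ℝ where
  toFun f := ∑ v ∈ D.attach, f v
  map_add' f g := by simp [Finset.sum_add_distrib]
  map_smul' c f := by simp [Finset.mul_sum]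

lemma class_subset {N N' : ReactionNetwork n} {κ κ' : Cplx n × Cplx n → ℝ}
    (hN : N.WeaklyReversible) (hδ : N.DeficiencyZero) (hN' : N'.WeaklyReversible)
    (hκ : N.PosRates κ) (hκ' : N'.PosRates κ')
    (hV : N.complexes = N'.complexes)
    (hw : ∀ z, N.netVector κ z = N'.netVector κ' z)
    {y z₀ : Cplx n} (hy : y ∈ N'.complexes) (hz₀ : z₀ ∈ N.complexes)
    {u₁ : Cplx n} (hu₁C : u₁ ∈ N.classOf z₀) (hu₁D : u₁ ∈ N'.classOf y) :
    N.classOf z₀ ⊆ N'.classOf y := by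
  classical
  set D := N'.classOf y with hD
  set C := N.classOf z₀ with hC
  have hyD : y ∈ D := self_mem_classOf hy
  have hDne : D.Nonempty := ⟨y, hyD⟩
  have hDsub' : D ⊆ N'.complexes := classOf_subset N' y
  have hDsub : D ⊆ N.complexes := by rw [hV]; exact hDsub'
  -- the N'-columns over D lie in the kernel of the sum functional
  have hmemker : ∀ z : ↥D, (fun v : ↥D => N'.colF κ' ↑z ↑v) ∈ LinearMap.ker (sumFL D) := by
    intro z
    have h0 : sumFL D (fun v : ↥D => N'.colF κ' ↑z ↑v)
        = ∑ v ∈ D.attach, N'.colF κ' ↑z ↑v := rfl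
    rw [LinearMap.mem_ker, h0, Finset.sum_attach D (fun u => N'.colF κ' ↑z u)]
    exact classSum_colF κ' hy ↑z
  set K : Submodule ℝ (↥D → ℝ) := LinearMap.ker (sumFL D) with hK
  set fam : ↥D → ↥K := fun z => ⟨fun v : ↥D => N'.colF κ' ↑z ↑v, hmemker z⟩ with hfam
  -- rank count
  have hsurj : Function.Surjective (sumFL D) := by
    intro t
    refine ⟨fun v => if v = ⟨y, hyD⟩ then t else 0, ?_⟩
    show ∑ v ∈ D.attach, (if v = ⟨y, hyD⟩ then t else 0) = t
    rw [Finset.sum_ite_eq' D.attach ⟨y, hyD⟩ (fun _ => t), if_pos (Finset.mem_attach D _)]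
  have hrank : 1 + Module.finrank ℝ ↥K = D.card := by
    have h1 := LinearMap.finrank_range_add_finrank_ker (sumFL D)
    rw [LinearMap.range_eq_top.2 hsurj, finrank_top, Module.finrank_self,
      Module.finrank_pi, Fintype.card_coe] at h1
    exact h1
  have hnli : ¬ LinearIndependent ℝ fam := by
    intro hli
    have hcard := hli.fintype_card_le_finrank
    rw [Fintype.card_coe] at hcard
    have hpos : 1 ≤ D.card := Finset.card_pos.2 hDne
    omega
  obtain ⟨g, hgrel, z₂, hgz₂⟩ := Fintype.not_linearIndependent_iff.1 hnli
  have hval0 : (∑ z : ↥D, g z • (fun v : ↥D => N'.colF κ' ↑z ↑v)) = (0 : ↥D → ℝ) := by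
    have hcoe := congrArg (Subtype.val) hgrel
    simpa [hfam] using hcoe
  have hval : ∀ v : ↥D, ∑ z ∈ Finset.univ (α := ↥D), g z * N'.colF κ' ↑z ↑v = 0 := by
    intro v
    have h2 := congrFun hval0 v
    simpa [Finset.sum_apply] using h2
  -- the coefficient function on complexes
  set G : Cplx n → ℝ := fun u => if h : u ∈ D then g ⟨u, h⟩ else 0 with hGdef
  have hGat : ∀ z : ↥D, G ↑z = g z := by
    intro z
    show (if h : (↑z : Cplx n) ∈ D then g ⟨↑z, h⟩ else 0) = g z
    rw [dif_pos z.2]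
  have hGsupp : ∀ z, z ∉ D → G z = 0 := by
    intro z hz
    show (if h : z ∈ D then g ⟨z, h⟩ else 0) = 0
    rw [dif_neg hz]
  have hGrel' : ∀ v : Cplx n, ∑ z ∈ D, G z * N'.colF κ' z v = 0 := by
    intro v
    have hconv : ∑ z ∈ D, G z * N'.colF κ' z v
        = ∑ z ∈ D.attach, g z * N'.colF κ' ↑z v := by
      rw [← Finset.sum_attach D (fun u => G u * N'.colF κ' u v)]
      exact Finset.sum_congr rfl fun z _ => by rw [hGat z]
    rw [hconv]
    by_cases hvD : v ∈ D
    · have := hval ⟨v, hvD⟩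
      rw [Finset.univ_eq_attach] at this
      exact this
    · refine Finset.sum_eq_zero fun z _ => ?_
      have hzD : N'.classOf (↑z : Cplx n) = D := classOf_eq_of_mem z.2
      rw [colF_eq_zero_of_not_mem_classOf (fun hm => hvD (hzD ▸ hm)), mul_zero]
  have hGbal : N'.Balanced κ' G := balanced_of_colF_rel hGsupp hGrel'
  have hGnon : ∀ z ∈ D, G z ≠ 0 := by
    intro z hz h0
    have hlink : N'.linked (↑z₂ : Cplx n) z := linked_of_mem_mem z₂.2 hz
    have hz₂0 : G ↑z₂ = 0 := balanced_vanish hN' hκ' hGbal h0 hlink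
    rw [hGat z₂] at hz₂0
    exact hgz₂ hz₂0
  -- transfer to the N-side by the kernel property
  set b : Cplx n → ℝ := fun v => ∑ z ∈ D, G z * N.colF κ z v with hbdef
  have hbsupp : ∀ v, v ∉ N.complexes → b v = 0 := fun v hv =>
    Finset.sum_eq_zero fun z _ => by rw [colF_eq_zero_of_not_mem_complexes hv, mul_zero]
  have hbPhi : ∑ v ∈ N.complexes, b v • v = 0 := by
    have h1 : ∑ v ∈ N.complexes, b v • v = ∑ z ∈ D, G z • N.netVector κ z := by
      calc ∑ v ∈ N.complexes, b v • v
          = ∑ v ∈ N.complexes, ∑ z ∈ D, (G z * N.colF κ z v) • v :=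
            Finset.sum_congr rfl fun v _ => Finset.sum_smul
        _ = ∑ z ∈ D, ∑ v ∈ N.complexes, (G z * N.colF κ z v) • v := Finset.sum_comm
        _ = ∑ z ∈ D, G z • N.netVector κ z := by
            refine Finset.sum_congr rfl fun z hz => ?_
            rw [← sum_colF_smul (κ := κ) (hDsub hz), Finset.smul_sum]
            exact Finset.sum_congr rfl fun v _ => mul_smul _ _ _
    have h2 : ∑ z ∈ D, G z • N.netVector κ z = 0 := by
      rw [Finset.sum_congr rfl (fun z _ => by rw [hw z] :
        ∀ z ∈ D, G z • N.netVector κ z = G z • N'.netVector κ' z)]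
      calc ∑ z ∈ D, G z • N'.netVector κ' z
          = ∑ z ∈ D, ∑ v ∈ N'.complexes, (G z * N'.colF κ' z v) • v := by
            refine Finset.sum_congr rfl fun z hz => ?_
            rw [← sum_colF_smul (κ := κ') (hDsub' hz), Finset.smul_sum]
            exact Finset.sum_congr rfl fun v _ => (mul_smul _ _ _).symm
        _ = ∑ v ∈ N'.complexes, ∑ z ∈ D, (G z * N'.colF κ' z v) • v := Finset.sum_comm
        _ = 0 := by
            refine Finset.sum_eq_zero fun v _ => ?_
            rw [← Finset.sum_smul, hGrel' v, zero_smul]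
    rw [h1, h2]
  have hbclass : ∀ u ∈ N.complexes, ∑ v ∈ N.classOf u, b v = 0 := by
    intro u hu
    rw [Finset.sum_comm]
    refine Finset.sum_eq_zero fun z _ => ?_
    rw [← Finset.mul_sum, classSum_colF κ hu z, mul_zero]
  have hb := N.kernelProp hδ hbsupp hbPhi hbclass
  -- now derive the containment
  intro w hwC
  by_contra hwD
  set S := D ∩ C with hSdef
  set aC : Cplx n → ℝ := fun u => if u ∈ S then G u else 0 with haC
  have haCsupp : ∀ z, z ∉ S → aC z = 0 := fun z hz => if_neg hz
  have hrelC : ∀ v, ∑ z ∈ S, aC z * N.colF κ z v = 0 := by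
    intro v
    have hinner : ∀ z ∈ S, aC z * N.colF κ z v = G z * N.colF κ z v := by
      intro z hz
      have : aC z = G z := if_pos hz
      rw [this]
    rw [Finset.sum_congr rfl hinner]
    by_cases hvC : v ∈ C
    · have hzero2 : ∀ z ∈ D \ S, G z * N.colF κ z v = 0 := by
        intro z hzDS
        rcases Finset.mem_sdiff.1 hzDS with ⟨hzD, hzS⟩
        have hzC : z ∉ C := fun hzC => hzS (Finset.mem_inter.2 ⟨hzD, hzC⟩)
        have hcol : N.colF κ z v = 0 := by
          apply colF_eq_zero_of_not_mem_classOf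
          intro hvz
          have h1 : N.classOf v = N.classOf z := classOf_eq_of_mem hvz
          have h2 : N.classOf v = C := classOf_eq_of_mem hvC
          have hzmem : z ∈ N.classOf z := self_mem_classOf (hDsub hzD)
          rw [← h1, h2] at hzmem
          exact hzC hzmem
        rw [hcol, mul_zero]
      have h3 := Finset.sum_inter_add_sum_sdiff D S (fun z => G z * N.colF κ z v)
      rw [Finset.inter_eq_right.2 Finset.inter_subset_left] at h3
      have h4 : ∑ z ∈ S, G z * N.colF κ z v = ∑ z ∈ D, G z * N.colF κ z v := by
        rw [← h3, Finset.sum_eq_zero hzero2, add_zero]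
      rw [h4]
      exact hb v
    · refine Finset.sum_eq_zero fun z hzS => ?_
      have hzC : z ∈ C := (Finset.mem_inter.1 hzS).2
      have hcol : N.colF κ z v = 0 := by
        apply colF_eq_zero_of_not_mem_classOf
        intro hvz
        have h1 : N.classOf z = C := classOf_eq_of_mem hzC
        exact hvC (h1 ▸ hvz)
      rw [hcol, mul_zero]
  have hbalC : N.Balanced κ aC := balanced_of_colF_rel haCsupp hrelC
  have hu₁S : u₁ ∈ S := Finset.mem_inter.2 ⟨hu₁D, hu₁C⟩
  have hwS : w ∉ S := fun hws => hwD (Finset.mem_inter.1 hws).1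
  have h0 : aC w = 0 := if_neg hwS
  have hlink : N.linked u₁ w := linked_of_mem_mem hu₁C hwC
  have haCu : aC u₁ = 0 := balanced_vanish hN hκ hbalC h0 hlink
  have hGu : aC u₁ = G u₁ := if_pos hu₁S
  exact hGnon u₁ hu₁D (hGu ▸ haCu)

/-- Linkage classes of two WR0 realizations of the same system coincide. -/
lemma classOf_eq_classOf {N N' : ReactionNetwork n} {κ κ' : Cplx n × Cplx n → ℝ}
    (hN : N.WR0) (hN' : N'.WR0) (hκ : N.PosRates κ) (hκ' : N'.PosRates κ')
    (hV : N.complexes = N'.complexes)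
    (hw : ∀ z, N.netVector κ z = N'.netVector κ' z)
    {y : Cplx n} (hy : y ∈ N.complexes) : N.classOf y = N'.classOf y := by
  have hy' : y ∈ N'.complexes := hV ▸ hy
  refine Finset.Subset.antisymm ?_ ?_
  · exact class_subset hN.1 hN.2 hN'.1 hκ hκ' hV hw hy' hy
      (self_mem_classOf hy) (self_mem_classOf hy')
  · exact class_subset hN'.1 hN'.2 hN.1 hκ' hκ hV.symm (fun z => (hw z).symm) hy hy'
      (self_mem_classOf hy') (self_mem_classOf hy)

/-! ### Chunk L : final assembly -/

lemma ext_reactions {N N' : ReactionNetwork n} (h : N.reactions = N'.reactions) : N = N' := by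
  cases N; cases N'
  simp only [mk.injEq]
  exact h

end ReactionNetwork

open ReactionNetwork

/-- A mass-action ODE system has at most one WR₀ realization:
if `(N,κ)` and `(N',κ')` are WR₀ mass-action systems generating the same ODE system
on the positive orthant, then `N = N'` and the rate constants of corresponding
reactions agree. -/
theorem wr0_realization_at_most_one {n : ℕ} (N N' : ReactionNetwork n)
    (κ κ' : Cplx n × Cplx n → ℝ)
    (hκ : N.PosRates κ) (hκ' : N'.PosRates κ')
    (hN : N.WR0) (hN' : N'.WR0)
    (h : ∀ x : Cplx n, (∀ i, 0 < x i) → N.massAction κ x = N'.massAction κ' x) :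
    N = N' ∧ ∀ r ∈ N.reactions, κ r = κ' r := by
  classical
  have hw : ∀ y, N.netVector κ y = N'.netVector κ' y := netVector_eq_of_massAction_eq h
  have hsrc : N.sources = N'.sources := sources_eq_of_netVector_eq hN.2 hN'.2 hκ hκ' hw
  have hV : N.complexes = N'.complexes := by
    rw [← hN.1.sources_eq, ← hN'.1.sources_eq, hsrc]
  have hclassEq : ∀ y ∈ N.complexes, N.classOf y = N'.classOf y :=
    fun y hy => classOf_eq_classOf hN hN' hκ hκ' hV hw hy
  have hcol : ∀ y ∈ N.complexes, ∀ v, N.colF κ y v = N'.colF κ' y v := by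
    intro y hy
    have hy' : y ∈ N'.complexes := hV ▸ hy
    have hs1 : ∀ v, v ∉ N.complexes → N.colF κ y v - N'.colF κ' y v = 0 := by
      intro v hv
      rw [colF_eq_zero_of_not_mem_complexes hv,
        colF_eq_zero_of_not_mem_complexes (by rwa [← hV]), sub_zero]
    have hs2 : ∑ v ∈ N.complexes, (N.colF κ y v - N'.colF κ' y v) • v = 0 := by
      have hsplit : ∑ v ∈ N.complexes, (N.colF κ y v - N'.colF κ' y v) • v
          = ∑ v ∈ N.complexes, N.colF κ y v • v
            - ∑ v ∈ N.complexes, N'.colF κ' y v • v := by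
        rw [← Finset.sum_sub_distrib]
        exact Finset.sum_congr rfl fun v _ => sub_smul _ _ _
      rw [hsplit, sum_colF_smul hy, hV, sum_colF_smul hy', hw y, sub_self]
    have hs3 : ∀ u ∈ N.complexes, ∑ v ∈ N.classOf u, (N.colF κ y v - N'.colF κ' y v) = 0 := by
      intro u hu
      have hsplit : ∑ v ∈ N.classOf u, (N.colF κ y v - N'.colF κ' y v)
          = ∑ v ∈ N.classOf u, N.colF κ y v - ∑ v ∈ N.classOf u, N'.colF κ' y v :=
        Finset.sum_sub_distrib _ _
      rw [hsplit, classSum_colF κ hu y, hclassEq u hu,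
        classSum_colF κ' (by rwa [← hV]) y, sub_self]
    have hall := N.kernelProp hN.2 (a := fun v => N.colF κ y v - N'.colF κ' y v) hs1 hs2 hs3
    intro v
    have := hall v
    exact sub_eq_zero.1 this
  have hsub : ∀ r ∈ N.reactions, r ∈ N'.reactions ∧ κ r = κ' r := by
    intro r hr
    have hy : r.1 ∈ N.complexes := fst_mem_complexes hr
    have hne : r.2 ≠ r.1 := Ne.symm (N.no_loops r hr)
    have hc := hcol r.1 hy r.2
    rw [colF_apply_ne (N := N) hne, colF_apply_ne (N := N') hne,
      if_pos (show (r.1, r.2) ∈ N.reactions from hr)] at hc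
    by_cases hr' : (r.1, r.2) ∈ N'.reactions
    · rw [if_pos hr'] at hc
      exact ⟨hr', hc⟩
    · rw [if_neg hr'] at hc
      exact absurd hc (ne_of_gt (hκ r hr))
  have hsub' : ∀ r ∈ N'.reactions, r ∈ N.reactions := by
    intro r hr
    have hy : r.1 ∈ N.complexes := by rw [hV]; exact fst_mem_complexes hr
    have hne : r.2 ≠ r.1 := Ne.symm (N'.no_loops r hr)
    have hc := hcol r.1 hy r.2
    rw [colF_apply_ne (N := N) hne, colF_apply_ne (N := N') hne,
      if_pos (show (r.1, r.2) ∈ N'.reactions from hr)] at hc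
    by_cases hr0 : (r.1, r.2) ∈ N.reactions
    · exact hr0
    · rw [if_neg hr0] at hc
      exact absurd hc.symm (ne_of_gt (hκ' r hr))
  have hreac : N.reactions = N'.reactions :=
    Finset.Subset.antisymm (fun r hr => (hsub r hr).1) hsub'
  exact ⟨ext_reactions hreac, fun r hr => (hsub r hr).2⟩
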